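/- Let θ ∈ (0,1/2), let (x̄,ȳ,z̄,λ̄,γ̄) be a strictly feasible point lying in N₂(2θ) with gap μ̄, let (Δx,Δy,Δz,Δλ,Δγ) be a corrector direction at this point, and set μ⁺ = (p̄+Δp)ᵀ(ω̄+Δω)/(2n). Then μ̄ ≤ μ⁺ ≤ μ̄·(1 + θ²(1+2θ)/(n(1−2θ)²)). -/

import Mathlib

/-!
Summing the centering equations gives `μ⁺ = μ̄ + ΔpᵀΔω / (2n)`, and `ΔpᵀΔω = ΔxᵀHΔx ≥ 0`
because the direction keeps `HΔx + Δλ - Δγ = 0`. For the upper bound, AM–GM on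
`ω̄ᵢΔpᵢ + p̄ᵢΔωᵢ = μ̄ - p̄ᵢω̄ᵢ` gives `4 p̄ᵢω̄ᵢ ΔpᵢΔωᵢ ≤ (μ̄ - p̄ᵢω̄ᵢ)²`; in `N₂(2θ)` every
`p̄ᵢω̄ᵢ ≥ (1 - 2θ)μ̄` and `‖p̄∘ω̄ - μ̄e‖ ≤ 2θμ̄`, so `ΔpᵀΔω ≤ θ²μ̄ / (1 - 2θ)`.
-/

open scoped BigOperators

noncomputable section

/-- Euclidean dot product of two vectors. -/
def dotp {ι : Type*} [Fintype ι] (u v : ι → ℝ) : ℝ := ∑ i, u i * v i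

/-- Euclidean norm of a vector. -/
def enorm {ι : Type*} [Fintype ι] (u : ι → ℝ) : ℝ := Real.sqrt (∑ i, (u i) ^ 2)

/-- Strict feasibility for the box-constrained QP KKT system. -/
def StrictlyFeasible {n : ℕ} (H : Matrix (Fin n) (Fin n) ℝ)
    (c x y z lam gam : Fin n → ℝ) : Prop :=
  H.mulVec x + c + lam - gam = 0 ∧
  x + y = (fun _ => 1) ∧
  x - z = (fun _ => -1) ∧
  (∀ i, 0 < y i) ∧ (∀ i, 0 < z i) ∧ (∀ i, 0 < lam i) ∧ (∀ i, 0 < gam i)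

/-- The central-path neighborhood `N₂(θ)`. -/
def N2 {n : ℕ} (H : Matrix (Fin n) (Fin n) ℝ) (c : Fin n → ℝ) (θ : ℝ)
    (x y z lam gam : Fin n → ℝ) : Prop :=
  StrictlyFeasible H c x y z lam gam ∧
  _root_.enorm (Sum.elim y z * Sum.elim lam gam
      - fun _ => dotp (Sum.elim y z) (Sum.elim lam gam) / (2 * (n : ℝ)))
    ≤ θ * (dotp (Sum.elim y z) (Sum.elim lam gam) / (2 * (n : ℝ)))

/-- First-derivative direction of the arc at a point `(x,y,z,λ,γ)`. -/
def FirstDir {n : ℕ} (H : Matrix (Fin n) (Fin n) ℝ)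
    (y z lam gam xd yd zd ld gd : Fin n → ℝ) : Prop :=
  H.mulVec xd + ld - gd = 0 ∧ yd = -xd ∧ zd = xd ∧
  lam * yd + y * ld = lam * y ∧ gam * zd + z * gd = gam * z

/-- Second-derivative direction of the arc at a point `(x,y,z,λ,γ)`. -/
def SecondDir {n : ℕ} (H : Matrix (Fin n) (Fin n) ℝ)
    (y z lam gam yd zd ld gd xdd ydd zdd ldd gdd : Fin n → ℝ) : Prop :=
  H.mulVec xdd + ldd - gdd = 0 ∧ ydd = -xdd ∧ zdd = xdd ∧
  lam * ydd + y * ldd = (-2 : ℝ) • (ld * yd) ∧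
  gam * zdd + z * gdd = (-2 : ℝ) • (gd * zd)

/-- The ellipse (arc) approximation point: `v(α) = v - v̇·sin α + v̈·(1 - cos α)`. -/
def arc {n : ℕ} (v vd vdd : Fin n → ℝ) (α : ℝ) : Fin n → ℝ :=
  v - Real.sin α • vd + (1 - Real.cos α) • vdd

/-- Corrector (centering) direction at a point `(x,y,z,λ,γ)` with target `μ`. -/
def CorrDir {n : ℕ} (H : Matrix (Fin n) (Fin n) ℝ)
    (y z lam gam dx dy dz dl dg : Fin n → ℝ) (mu : ℝ) : Prop :=
  H.mulVec dx + dl - dg = 0 ∧ dy = -dx ∧ dz = dx ∧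
  lam * dy + y * dl = (fun _ => mu) - lam * y ∧
  gam * dz + z * dg = (fun _ => mu) - gam * z

open Matrix

section Vectors

variable {ι : Type*} [Fintype ι]

theorem dotp_eq_dotProduct (u v : ι → ℝ) : dotp u v = u ⬝ᵥ v := rfl

theorem dotp_pos [Nonempty ι] {u v : ι → ℝ} (hu : ∀ i, 0 < u i) (hv : ∀ i, 0 < v i) :
    0 < dotp u v :=
  Finset.sum_pos (fun i _ => mul_pos (hu i) (hv i)) Finset.univ_nonempty

theorem sum_sq_le_sq_of_enorm_le {u : ι → ℝ} {r : ℝ} (h : _root_.enorm u ≤ r) :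
    ∑ i, u i ^ 2 ≤ r ^ 2 :=
  (Real.sqrt_le_iff.mp h).2

theorem abs_le_enorm (u : ι → ℝ) (i : ι) : |u i| ≤ _root_.enorm u :=
  Real.abs_le_sqrt <|
    Finset.single_le_sum (f := fun j => u j ^ 2) (fun _ _ => sq_nonneg _) (Finset.mem_univ i)

theorem dotp_add_dotp_eq_zero {p w dp dw : ι → ℝ} {μ : ℝ}
    (hc : w * dp + p * dw = (fun _ => μ) - p * w) (hμ : Fintype.card ι * μ = dotp p w) :
    dotp w dp + dotp p dw = 0 := by
  have := congrArg (fun f => ∑ i, f i) hc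
  simp only [Pi.add_apply, Pi.mul_apply, Pi.sub_apply, Finset.sum_add_distrib,
    Finset.sum_sub_distrib, Finset.sum_const, Finset.card_univ, nsmul_eq_mul] at this
  rw [dotp, dotp, this, hμ, dotp, sub_self]

theorem dotp_add_add_of_centering {p w dp dw : ι → ℝ} {μ : ℝ}
    (hc : w * dp + p * dw = (fun _ => μ) - p * w) (hμ : Fintype.card ι * μ = dotp p w) :
    dotp (p + dp) (w + dw) = dotp p w + dotp dp dw := by
  have h := dotp_add_dotp_eq_zero hc hμ
  simp only [dotp_eq_dotProduct, add_dotProduct, dotProduct_add] at h ⊢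
  rw [dotProduct_comm w dp] at h
  linarith

-- AM–GM: `(b u + a v)² - 4 a b u v = (b u - a v)²`.
theorem four_mul_mul_le_sq {a b u v r m : ℝ} (hm : 0 ≤ m) (hma : m ≤ a * b)
    (h : b * u + a * v = r) : 4 * m * (u * v) ≤ r ^ 2 := by
  subst h
  rcases le_total 0 (u * v) with huv | huv
  · nlinarith [sq_nonneg (b * u - a * v)]
  · nlinarith

theorem dotp_le_of_centering {p w dp dw : ι → ℝ} {μ β : ℝ} (hβ : β < 1) (hμ : 0 < μ)
    (hc : w * dp + p * dw = (fun _ => μ) - p * w)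
    (hN : _root_.enorm (p * w - fun _ => μ) ≤ β * μ) :
    dotp dp dw ≤ β ^ 2 * μ / (4 * (1 - β)) := by
  have hm : 0 < (1 - β) * μ := mul_pos (by linarith) hμ
  have hlow : ∀ i, (1 - β) * μ ≤ p i * w i := fun i => by
    have := (abs_le_enorm _ i).trans hN
    simp only [Pi.sub_apply, Pi.mul_apply] at this
    linarith [neg_abs_le (p i * w i - μ)]
  have hterm : ∀ i, 4 * ((1 - β) * μ) * (dp i * dw i) ≤ (p i * w i - μ) ^ 2 := fun i => by
    rw [sub_sq_comm]
    exact four_mul_mul_le_sq hm.le (hlow i) (by simpa using congrFun hc i)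
  have hsum : 4 * ((1 - β) * μ) * dotp dp dw ≤ (β * μ) ^ 2 := by
    rw [dotp, Finset.mul_sum]
    exact (Finset.sum_le_sum fun i _ => hterm i).trans (sum_sq_le_sq_of_enorm_le hN)
  rw [le_div_iff₀ (by linarith)]
  nlinarith

theorem dotp_sumElim_neg_self_eq {H : Matrix ι ι ℝ}
    {dx dl dg : ι → ℝ} (h : H *ᵥ dx + dl - dg = 0) :
    dotp (Sum.elim (-dx) dx) (Sum.elim dl dg) = dx ⬝ᵥ H *ᵥ dx := by
  rw [dotp_eq_dotProduct, sumElim_dotProduct_sumElim, neg_dotProduct,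
    show H *ᵥ dx = dg - dl by linear_combination h, dotProduct_sub]
  ring

end Vectors

theorem CorrDir.sumElim_complementarity {n : ℕ} {H : Matrix (Fin n) (Fin n) ℝ}
    {y z lam gam dx dy dz dl dg : Fin n → ℝ} {mu : ℝ}
    (h : CorrDir H y z lam gam dx dy dz dl dg mu) :
    Sum.elim lam gam * Sum.elim dy dz + Sum.elim y z * Sum.elim dl dg
      = (fun _ => mu) - Sum.elim y z * Sum.elim lam gam := by
  obtain ⟨-, -, -, hy, hz⟩ := h
  rw [funext_iff] at hy hz
  ext (i | i)
  · simpa [mul_comm (y i)] using hy i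
  · simpa [mul_comm (z i)] using hz i

theorem add_div_le_mul_one_add {θ μ D N : ℝ} (hθ : θ ∈ Set.Ioo (0 : ℝ) (1 / 2)) (hN : 0 < N)
    (hμ : 0 ≤ μ) (hD : D ≤ (2 * θ) ^ 2 * μ / (4 * (1 - 2 * θ))) :
    μ + D / (2 * N) ≤ μ * (1 + θ ^ 2 * (1 + 2 * θ) / (N * (1 - 2 * θ) ^ 2)) := by
  obtain ⟨hθ0, hθ1⟩ := hθ
  have h2θ : 0 < 1 - 2 * θ := by linarith
  have hD' : D / (2 * N) ≤ (2 * θ) ^ 2 * μ / (4 * (1 - 2 * θ)) / (2 * N) := by gcongr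
  -- the bound of the statement is weaker than `μ θ² / (2N(1 - 2θ))` since `1 - 2θ ≤ 2(1 + 2θ)`
  have hweak : (2 * θ) ^ 2 * μ / (4 * (1 - 2 * θ)) / (2 * N)
      ≤ μ * (θ ^ 2 * (1 + 2 * θ) / (N * (1 - 2 * θ) ^ 2)) := by
    rw [div_div, mul_div_assoc', div_le_div_iff₀ (by positivity) (by positivity)]
    have : 0 ≤ μ * θ ^ 2 * N * (1 - 2 * θ) := by positivity
    nlinarith
  linarith

/-- `μ̄ ≤ μ⁺ ≤ μ̄·(1 + θ²(1+2θ)/(n(1−2θ)²))`. -/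
theorem stmt_15 {n : ℕ} (hn : 0 < n) (H : Matrix (Fin n) (Fin n) ℝ) (hH : H.PosDef)
    (c : Fin n → ℝ)
    (θ : ℝ) (hθ : θ ∈ Set.Ioo (0 : ℝ) (1 / 2))
    (xb yb zb lb gb : Fin n → ℝ)
    (mub : ℝ)
    (hmub : mub = dotp (Sum.elim yb zb) (Sum.elim lb gb) / (2 * (n : ℝ)))
    (hN : N2 H c (2 * θ) xb yb zb lb gb)
    (dx dy dz dl dg : Fin n → ℝ)
    (hcd : CorrDir H yb zb lb gb dx dy dz dl dg mub)
    (muP : ℝ)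
    (hmuP : muP = dotp (Sum.elim (yb + dy) (zb + dz)) (Sum.elim (lb + dl) (gb + dg))
        / (2 * (n : ℝ))) :
    mub ≤ muP ∧
    muP ≤ mub * (1 + θ ^ 2 * (1 + 2 * θ) / ((n : ℝ) * (1 - 2 * θ) ^ 2)) := by
  obtain ⟨⟨-, -, -, hy, hz, hl, hg⟩, hcentral⟩ := hN
  have : Nonempty (Fin n) := ⟨⟨0, hn⟩⟩
  have hn' : (0 : ℝ) < n := Nat.cast_pos.mpr hn
  have hμ : 0 < mub := hmub ▸ div_pos (dotp_pos (Sum.forall.2 ⟨hy, hz⟩)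
    (Sum.forall.2 ⟨hl, hg⟩)) (by positivity)
  have hcard :
      (Fintype.card (Fin n ⊕ Fin n) : ℝ) * mub = dotp (Sum.elim yb zb) (Sum.elim lb gb) := by
    rw [hmub, Fintype.card_sum, Fintype.card_fin]; push_cast; field_simp; ring
  have hcompl := hcd.sumElim_complementarity
  have hgap : muP = mub + dotp (Sum.elim dy dz) (Sum.elim dl dg) / (2 * n) := by
    rw [hmuP, Sum.elim_add_add, Sum.elim_add_add, dotp_add_add_of_centering hcompl hcard, add_div,
      ← hmub]
  have hcurv_nonneg : 0 ≤ dotp (Sum.elim dy dz) (Sum.elim dl dg) := by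
    obtain ⟨hHx, hdy, hdz, -, -⟩ := hcd
    rw [hdy, hdz, dotp_sumElim_neg_self_eq hHx]
    simpa using hH.posSemidef.dotProduct_mulVec_nonneg dx
  rw [← hmub] at hcentral
  have hcurv_le := dotp_le_of_centering (by linarith [hθ.2]) hμ hcompl hcentral
  exact ⟨hgap ▸ le_add_of_nonneg_right (by positivity),
    hgap ▸ add_div_le_mul_one_add hθ hn' hμ.le hcurv_le⟩

end
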